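/- arXiv:1306.3171 — 3 statements merged into one kernel-verified Lean document; each statement's English description precedes it below -/
import Mathlib

section
/- Let $\widehat{\Sigma} \in \mathbb{R}^{p\times p}$ be a symmetric positive semidefinite matrix with $\widehat{\Sigma}_{ii} > 0$, and let $\mu \in [0,1)$. If $m \in \mathbb{R}^p$ satisfies $\|\widehat{\Sigma} m - e_i\|_\infty \le \mu$, then $m^{\sf T} \widehat{\Sigma} m \ge (1-\mu)^2 / \widehat{\Sigma}_{ii}$. -/
/-!
Cauchy–Schwarz for the semi-inner product `(x, y) ↦ xᵀ Σ̂ y`, applied to `eᵢ` and `m`, gives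
`((Σ̂ m)ᵢ)² ≤ Σ̂ᵢᵢ · mᵀ Σ̂ m`, while feasibility forces `(Σ̂ m)ᵢ ≥ 1 - μ > 0`.
-/

open Matrix

namespace Matrix

variable {n R : Type*} [Fintype n]

lemma IsHermitian.dotProduct_mulVec_comm [CommSemiring R] [StarRing R] [TrivialStar R]
    {A : Matrix n n R} (hA : A.IsHermitian) (x y : n → R) :
    x ⬝ᵥ A *ᵥ y = y ⬝ᵥ A *ᵥ x := by
  rw [dotProduct_mulVec, ← mulVec_transpose, ← conjTranspose_eq_transpose_of_trivial, hA,
    dotProduct_comm]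

variable [DecidableEq n] [CommRing R] [LinearOrder R] [IsStrictOrderedRing R] [StarRing R]
  [TrivialStar R] {A : Matrix n n R}

lemma PosSemidef.dotProduct_mulVec_sq_le (hA : A.PosSemidef) (x y : n → R) :
    (x ⬝ᵥ A *ᵥ y) ^ 2 ≤ (x ⬝ᵥ A *ᵥ x) * (y ⬝ᵥ A *ᵥ y) := by
  have := LinearMap.BilinForm.apply_mul_apply_le_of_forall_zero_le (toBilin' A)
    (fun z ↦ by simpa [toBilin'_apply'] using hA.dotProduct_mulVec_nonneg z) x y
  rwa [toBilin'_apply', toBilin'_apply', toBilin'_apply', toBilin'_apply',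
    hA.isHermitian.dotProduct_mulVec_comm y, ← sq] at this

lemma PosSemidef.mulVec_apply_sq_le (hA : A.PosSemidef) (x : n → R) (i : n) :
    (A *ᵥ x) i ^ 2 ≤ A i i * (x ⬝ᵥ A *ᵥ x) := by
  simpa [single_one_dotProduct, mulVec_single_one] using
    hA.dotProduct_mulVec_sq_le (Pi.single i 1) x

end Matrix

theorem debiased_variance_lower_bound_general
    (p : ℕ) (Shat : Matrix (Fin p) (Fin p) ℝ)
    (hpsd : Shat.PosSemidef)
    (i : Fin p)
    (μ : ℝ) (hμ1 : μ < 1)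
    (m : Fin p → ℝ)
    (hfeas : ∀ j, |(Shat *ᵥ m) j - (if j = i then (1:ℝ) else 0)| ≤ μ) :
    (1 - μ)^2 / Shat i i ≤ m ⬝ᵥ (Shat *ᵥ m) := by
  have hcoord : 1 - μ ≤ (Shat *ᵥ m) i := by
    have := (abs_le.mp (hfeas i)).1
    rw [if_pos rfl] at this
    linarith
  have hquad : 0 ≤ m ⬝ᵥ Shat *ᵥ m := by simpa using hpsd.dotProduct_mulVec_nonneg m
  refine div_le_of_le_mul₀ hpsd.diag_nonneg hquad ?_
  calc (1 - μ) ^ 2 ≤ (Shat *ᵥ m) i ^ 2 := pow_le_pow_left₀ (by linarith) hcoord 2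
    _ ≤ Shat i i * (m ⬝ᵥ Shat *ᵥ m) := hpsd.mulVec_apply_sq_le m i
    _ = (m ⬝ᵥ Shat *ᵥ m) * Shat i i := mul_comm _ _

/-- Variance lower bound for the de-biased LASSO: any feasible point `m` of the
decorrelation program with parameter `μ ∈ [0,1)` satisfies
`mᵀ Σ̂ m ≥ (1-μ)² / Σ̂ᵢᵢ`. -/
theorem debiased_variance_lower_bound
    (p : ℕ) (Shat : Matrix (Fin p) (Fin p) ℝ)
    (hsym : Shat.IsSymm) (hpsd : Shat.PosSemidef)
    (i : Fin p) (hdiag : 0 < Shat i i)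
    (μ : ℝ) (hμ0 : 0 ≤ μ) (hμ1 : μ < 1)
    (m : Fin p → ℝ)
    (hfeas : ∀ j, |(Shat *ᵥ m) j - (if j = i then (1:ℝ) else 0)| ≤ μ) :
    (1 - μ)^2 / Shat i i ≤ m ⬝ᵥ (Shat *ᵥ m) :=
  debiased_variance_lower_bound_general p Shat hpsd i μ hμ1 m hfeas
end

section
/- For a symmetric positive semidefinite matrix $\widehat{\Sigma} \in \mathbb{R}^{p\times p}$, any vector $m \in \mathbb{R}^p$ with $\|\widehat{\Sigma} m - e_i\|_\infty \le \mu$, and any $c \ge 0$, we have $m^{\sf T}\widehat{\Sigma} m \ge c(1-\mu) - \frac{c^2}{4}\widehat{\Sigma}_{ii}$. -/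
/-!
Expanding `0 ≤ (m - v)ᵀ Σ̂ (m - v)` with `v = (c/2) eᵢ` gives
`mᵀ Σ̂ m ≥ c (Σ̂ m)ᵢ - (c²/4) Σ̂ᵢᵢ`, and feasibility gives `(Σ̂ m)ᵢ ≥ 1 - μ`.
-/

open Matrix

namespace Matrix

variable {n R : Type*} [Fintype n]

theorem IsSymm.dotProduct_mulVec_comm [CommSemiring R] {S : Matrix n n R} (hS : S.IsSymm)
    (v w : n → R) : v ⬝ᵥ (S *ᵥ w) = w ⬝ᵥ (S *ᵥ v) := by
  rw [dotProduct_mulVec, ← mulVec_transpose, hS.eq, dotProduct_comm]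

theorem PosSemidef.two_mul_dotProduct_mulVec_sub_le {S : Matrix n n ℝ} (hS : S.PosSemidef)
    (v m : n → ℝ) : 2 * (v ⬝ᵥ (S *ᵥ m)) - v ⬝ᵥ (S *ᵥ v) ≤ m ⬝ᵥ (S *ᵥ m) := by
  have hsq := hS.dotProduct_mulVec_nonneg (m - v)
  have hcomm := (isHermitian_iff_isSymm.mp hS.isHermitian).dotProduct_mulVec_comm v m
  simp only [star_trivial, mulVec_sub, dotProduct_sub, sub_dotProduct] at hsq
  linarith

end Matrix

theorem debiased_lagrangian_lower_bound_general
    (p : ℕ) (Shat : Matrix (Fin p) (Fin p) ℝ)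
    (hpsd : Shat.PosSemidef)
    (i : Fin p) (μ : ℝ)
    (m : Fin p → ℝ)
    (hfeas : ∀ j, |(Shat *ᵥ m) j - (if j = i then (1:ℝ) else 0)| ≤ μ)
    (c : ℝ) (hc : 0 ≤ c) :
    c * (1 - μ) - c^2 / 4 * Shat i i ≤ m ⬝ᵥ (Shat *ᵥ m) := by
  have hcoord : 1 - μ ≤ (Shat *ᵥ m) i := by
    have := abs_le.mp (hfeas i)
    rw [if_pos rfl] at this
    linarith [this.1]
  have hsq := hpsd.two_mul_dotProduct_mulVec_sub_le (Pi.single i (c / 2)) m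
  rw [single_dotProduct, single_dotProduct, mulVec_single] at hsq
  simp only [Pi.smul_apply, col_apply, op_smul_eq_mul] at hsq
  linarith [mul_le_mul_of_nonneg_left hcoord hc]

/-- Lagrangian lower bound step: for any feasible `m` of the decorrelation
program and any `c ≥ 0`, `mᵀ Σ̂ m ≥ c(1-μ) - (c²/4) Σ̂ᵢᵢ`. -/
theorem debiased_lagrangian_lower_bound
    (p : ℕ) (Shat : Matrix (Fin p) (Fin p) ℝ)
    (hsym : Shat.IsSymm) (hpsd : Shat.PosSemidef)
    (i : Fin p) (μ : ℝ)
    (m : Fin p → ℝ)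
    (hfeas : ∀ j, |(Shat *ᵥ m) j - (if j = i then (1:ℝ) else 0)| ≤ μ)
    (c : ℝ) (hc : 0 ≤ c) :
    c * (1 - μ) - c^2 / 4 * Shat i i ≤ m ⬝ᵥ (Shat *ᵥ m) :=
  debiased_lagrangian_lower_bound_general p Shat hpsd i μ m hfeas c hc
end

section
/- Let $\widehat{\Sigma} \in \mathbb{R}^{p\times p}$ be symmetric positive semidefinite, and suppose $M \in \mathbb{R}^{p\times p}$ satisfies $|M\widehat{\Sigma} - I|_\infty \le \mu$ with $\mu < 1/2$. Then for every $i$, the diagonal entry $[M\widehat{\Sigma}M^{\sf T}]_{ii} \ge 1/(4\widehat{\Sigma}_{ii})$ whenever $\widehat{\Sigma}_{ii} > 0$. -/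
/-!
Cauchy–Schwarz for the semi-inner product `⟨x, y⟩ = xᵀ Σ̂ y`, applied to the `i`-th row of `M`
and the basis vector `eᵢ`, gives `((M Σ̂)ᵢᵢ)² ≤ (M Σ̂ Mᵀ)ᵢᵢ Σ̂ᵢᵢ`; the coherence bound makes
`(M Σ̂)ᵢᵢ ≥ 1 - μ > 1/2`.
-/

open Matrix

section

variable {n R : Type*} [Fintype n] [DecidableEq n] [CommRing R] [LinearOrder R]
  [IsStrictOrderedRing R] [StarRing R] [TrivialStar R]

theorem Matrix.PosSemidef.dotProduct_mulVec_sq_le_s17 {A : Matrix n n R} (hA : A.PosSemidef)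
    (x y : n → R) : (x ⬝ᵥ A *ᵥ y) ^ 2 ≤ (x ⬝ᵥ A *ᵥ x) * (y ⬝ᵥ A *ᵥ y) := by
  have hnonneg (v : n → R) : 0 ≤ A.toBilin' v v := by
    simpa only [toBilin'_apply', star_trivial] using hA.dotProduct_mulVec_nonneg v
  have hsymm : LinearMap.IsSymm A.toBilin' :=
    LinearMap.BilinForm.isSymm_iff.mp <|
      isSymm_toBilin'_iff_isSymm.mpr (isHermitian_iff_isSymm.mp hA.isHermitian)
  simpa only [toBilin'_apply'] using A.toBilin'.apply_sq_le_of_symm hnonneg hsymm x y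

theorem Matrix.PosSemidef.mul_apply_sq_le {m : Type*} {A : Matrix n n R} (hA : A.PosSemidef)
    (B : Matrix m n R) (i : m) (j : n) : (B * A) i j ^ 2 ≤ (B * A * Bᵀ) i i * A j j := by
  have h := hA.dotProduct_mulVec_sq_le_s17 (B i) (Pi.single j 1)
  rwa [mulVec_single_one, single_dotProduct, one_mul, col_apply, dotProduct_mulVec] at h

end

theorem diag_variance_lower_bound_general
    (p : ℕ) (Shat M : Matrix (Fin p) (Fin p) ℝ)
    (hpsd : Shat.PosSemidef)
    (μ : ℝ) (hμ : μ < 1/2)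
    (hcoh : ∀ i j, |(M * Shat - 1) i j| ≤ μ) :
    ∀ i, 0 < Shat i i → 1 / (4 * Shat i i) ≤ (M * Shat * Mᵀ) i i := by
  intro i hi
  have hdiag : 1 / 2 ≤ (M * Shat) i i := by
    have h := (abs_le.mp (hcoh i i)).1
    rw [Matrix.sub_apply, one_apply_eq] at h
    linarith
  have hprod : 1 / 4 ≤ (M * Shat * Mᵀ) i i * Shat i i :=
    calc (1 / 4 : ℝ) = (1 / 2) ^ 2 := by norm_num
      _ ≤ (M * Shat) i i ^ 2 := pow_le_pow_left₀ (by norm_num) hdiag 2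
      _ ≤ (M * Shat * Mᵀ) i i * Shat i i := hpsd.mul_apply_sq_le M i i
  rw [div_le_iff₀ (by positivity)]
  linarith

/-- If `|MΣ̂ − I|∞ ≤ μ < 1/2`, then the diagonal entries of `MΣ̂Mᵀ` satisfy
`[MΣ̂Mᵀ]ᵢᵢ ≥ 1/(4 Σ̂ᵢᵢ)` whenever `Σ̂ᵢᵢ > 0`. -/
theorem diag_variance_lower_bound
    (p : ℕ) (Shat M : Matrix (Fin p) (Fin p) ℝ)
    (hsym : Shat.IsSymm) (hpsd : Shat.PosSemidef)
    (μ : ℝ) (hμ : μ < 1/2)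
    (hcoh : ∀ i j, |(M * Shat - 1) i j| ≤ μ) :
    ∀ i, 0 < Shat i i → 1 / (4 * Shat i i) ≤ (M * Shat * Mᵀ) i i :=
  diag_variance_lower_bound_general p Shat M hpsd μ hμ hcoh
end
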